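/- Let R₂ = 𝔽₂[X,Y]/(Y² + X·Y + X⁵ + X³ + X² + X), and write x, y for the images of X, Y in R₂. Then in ClassGroup(R₂), the class of the ideal (x − 1, y) is nontrivial and is not equal to the class of the ideal (x, y); likewise the class of the ideal (x − 1, y − 1) is nontrivial and is not equal to the class of the ideal (x, y). -/

import Mathlib

noncomputable section

open Polynomial

/-- The polynomial `Y² + X·Y + (X⁵ + X³ + X² + X)` as an element of `𝔽₂[X][Y]`
(the outer variable is `Y`, the inner variable is `X`). -/
def f2 : Polynomial (Polynomial (ZMod 2)) :=
  X ^ 2 + C X * X + C (X ^ 5 + X ^ 3 + X ^ 2 + X)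

/-- The ring `R₂ = 𝔽₂[X,Y]/(Y² + X·Y + X⁵ + X³ + X² + X)`. -/
def R2 : Type := Polynomial (Polynomial (ZMod 2)) ⧸ Ideal.span {f2}

instance : CommRing R2 := Ideal.Quotient.commRing _

/-- The quotient map `𝔽₂[X][Y] → R₂`. -/
def toR2 : Polynomial (Polynomial (ZMod 2)) →+* R2 :=
  Ideal.Quotient.mk (Ideal.span {f2})

/-- The image `x` of `X` in `R₂`. -/
def x2 : R2 := toR2 (C X)

/-- The image `y` of `Y` in `R₂`. -/
def y2 : R2 := toR2 X

/-!
The hyperelliptic involution `σ = conj : y ↦ y + x` of `R₂` fixes `𝔽₂[x]`, and every element of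
`R₂` is `a + b y` with `a, b ∈ 𝔽₂[x]`, of norm
`(a + b y) σ(a + b y) = a² + a b x + b² (x⁵ + x³ + x² + x)`.
As `2 deg a` and `2 deg b + 5` have different parities, this norm is a square (when `b = 0`), hence
has no linear term, or has degree at least `5`. So `1` is the only unit of `R₂`, and no element
has norm `x - 1` or `x (x - 1)`. On the other hand `P σ(P) = (x - 1)` for `P = (x - 1, y)` and
`P = (x - 1, y - 1)`, and `P₀ σ(P₀) = P₀² = (x)` for `P₀ = (x, y)`; hence neither `P` nor `P P₀` is
principal, while `[P₀]² = 1`, so `[P] ≠ 1` and `[P] ≠ [P₀]`.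
-/

open scoped nonZeroDivisors

theorem Polynomial.coeff_pow_char_one {p : ℕ} [Fact p.Prime] (a : (ZMod p)[X]) :
    (a ^ p).coeff 1 = 0 := by
  rw [← ZMod.expand_card, coeff_expand (Fact.out : p.Prime).pos,
    if_neg (Nat.not_dvd_of_pos_of_lt one_pos (Fact.out : p.Prime).one_lt)]

theorem Polynomial.eq_one_of_isUnit {R : Type*} [CommRing R] [IsDomain R] [Unique Rˣ]
    {p : R[X]} (hp : IsUnit p) : p = 1 := by
  obtain ⟨r, ⟨u, rfl⟩, rfl⟩ := Polynomial.isUnit_iff.mp hp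
  rw [Units.eq_one u, Units.val_one, map_one]

theorem Ideal.span_pair_mul_span_pair_eq_span_singleton {R : Type*} [CommRing R]
    {a b c d t : R} (hac : t ∣ a * c) (had : t ∣ a * d) (hbc : t ∣ b * c) (hbd : t ∣ b * d)
    (ht : ∃ p q r s, p * (a * c) + q * (a * d) + r * (b * c) + s * (b * d) = t) :
    Ideal.span {a, b} * Ideal.span {c, d} = Ideal.span {t} := by
  rw [Ideal.span_pair_mul_span_pair]
  refine le_antisymm ?_ ?_
  · simp only [Ideal.span_le, Set.insert_subset_iff, Set.singleton_subset_iff, SetLike.mem_coe,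
      Ideal.mem_span_singleton]
    exact ⟨hac, had, hbc, hbd⟩
  · obtain ⟨p, q, r, s, rfl⟩ := ht
    rw [Ideal.span_singleton_le_iff_mem]
    refine add_mem (add_mem (add_mem ?_ ?_) ?_) ?_ <;>
      exact Ideal.mul_mem_left _ _ (Ideal.subset_span (by simp))

theorem ClassGroup.mk0_ne_mk0_of_not_isPrincipal_mul {R : Type*} [CommRing R]
    [IsDedekindDomain R] {I J : (Ideal R)⁰} (hJ : ((J : Ideal R) * J).IsPrincipal)
    (hIJ : ¬ ((I : Ideal R) * J).IsPrincipal) : ClassGroup.mk0 I ≠ ClassGroup.mk0 J := by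
  intro h
  apply hIJ
  rw [← ClassGroup.mk0_eq_one_iff (mul_mem I.2 J.2)]
  change ClassGroup.mk0 (I * J) = 1
  rw [map_mul, h, ← map_mul]
  exact (ClassGroup.mk0_eq_one_iff (mul_mem J.2 J.2)).mpr hJ

namespace R2

theorem two_eq_zero : (2 : R2) = 0 := by
  rw [← map_ofNat toR2 2, CharTwo.two_eq_zero (R := (ZMod 2)[X][X]), map_zero]

def ofPoly : (ZMod 2)[X] →+* R2 := toR2.comp C

theorem ofPoly_X : ofPoly X = x2 := rfl

theorem f2_monic : f2.Monic := by unfold f2; monicity!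

theorem f2_natDegree : f2.natDegree = 2 := by unfold f2; compute_degree!

theorem toR2_f2 : toR2 f2 = 0 := Ideal.Quotient.mk_singleton_self f2

theorem y2_mul_y2_add_x2 : y2 * (y2 + x2) = x2 ^ 5 + x2 ^ 3 + x2 ^ 2 + x2 := by
  have h : y2 ^ 2 + x2 * y2 + (x2 ^ 5 + x2 ^ 3 + x2 ^ 2 + x2) = 0 := by
    simpa only [f2, x2, y2, map_add, map_mul, map_pow] using toR2_f2
  linear_combination h - (x2 ^ 5 + x2 ^ 3 + x2 ^ 2 + x2) * two_eq_zero

theorem ofPoly_injective : Function.Injective ofPoly := by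
  refine (injective_iff_map_eq_zero _).mpr fun p hp => C_eq_zero.mp ?_
  have hdvd : f2 ∣ C p := Ideal.mem_span_singleton.mp (Ideal.Quotient.eq_zero_iff_mem.mp hp)
  exact eq_zero_of_dvd_of_natDegree_lt hdvd (by rw [natDegree_C, f2_natDegree]; norm_num)

theorem exists_eq_ofPoly_add_ofPoly_mul_y2 (g : R2) : ∃ a b, g = ofPoly a + ofPoly b * y2 := by
  obtain ⟨p, rfl⟩ := Ideal.Quotient.mk_surjective g
  set r := p %ₘ f2
  have hmod : toR2 p = toR2 r := by
    conv_lhs => rw [← modByMonic_add_div p f2]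
    rw [map_add, map_mul, toR2_f2, zero_mul, add_zero]
  have hr : r = C (r.coeff 1) * X + C (r.coeff 0) := by
    have hlt := degree_modByMonic_lt p f2_monic
    rw [degree_eq_natDegree f2_monic.ne_zero, f2_natDegree] at hlt
    exact eq_X_add_C_of_degree_le_one (Order.le_of_lt_succ hlt)
  refine ⟨r.coeff 0, r.coeff 1, ?_⟩
  change toR2 p = _
  conv_lhs => rw [hmod, hr, map_add, map_mul, add_comm]
  rfl

theorem eval₂_f2_y2_add_x2 : f2.eval₂ ofPoly (y2 + x2) = 0 := by
  simp only [f2, eval₂_add, eval₂_mul, eval₂_pow, eval₂_C, eval₂_X, map_add, map_pow, ofPoly_X]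
  linear_combination y2_mul_y2_add_x2 +
    (x2 * y2 + x2 ^ 2 + (x2 ^ 5 + x2 ^ 3 + x2 ^ 2 + x2)) * two_eq_zero

def conj : R2 →+* R2 :=
  Ideal.Quotient.lift _ (eval₂RingHom ofPoly (y2 + x2)) fun p hp => by
    obtain ⟨q, rfl⟩ := Ideal.mem_span_singleton.mp hp
    rw [map_mul, coe_eval₂RingHom, eval₂_f2_y2_add_x2, zero_mul]

theorem conj_toR2 (p : (ZMod 2)[X][X]) : conj (toR2 p) = p.eval₂ ofPoly (y2 + x2) :=
  Ideal.Quotient.lift_mk _ _ _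

theorem conj_ofPoly (p : (ZMod 2)[X]) : conj (ofPoly p) = ofPoly p := by
  rw [ofPoly, RingHom.comp_apply, conj_toR2, eval₂_C]
  rfl

theorem conj_x2 : conj x2 = x2 := conj_ofPoly X

theorem conj_y2 : conj y2 = y2 + x2 := by
  rw [y2, conj_toR2, eval₂_X]
  rfl

def normForm (a b : (ZMod 2)[X]) : (ZMod 2)[X] :=
  a ^ 2 + a * b * X + b ^ 2 * (X ^ 5 + X ^ 3 + X ^ 2 + X)

theorem mul_conj (a b : (ZMod 2)[X]) :
    (ofPoly a + ofPoly b * y2) * conj (ofPoly a + ofPoly b * y2) = ofPoly (normForm a b) := by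
  simp only [map_add, map_mul, map_pow, conj_ofPoly, conj_y2, normForm, ofPoly_X]
  linear_combination ofPoly b ^ 2 * y2_mul_y2_add_x2 + ofPoly a * ofPoly b * y2 * two_eq_zero

theorem le_natDegree_normForm {a b : (ZMod 2)[X]} (hb : b ≠ 0) : 5 ≤ (normForm a b).natDegree := by
  have hd : (X ^ 5 + X ^ 3 + X ^ 2 + X : (ZMod 2)[X]).natDegree = 5 := by compute_degree!
  have hd0 : (X ^ 5 + X ^ 3 + X ^ 2 + X : (ZMod 2)[X]) ≠ 0 :=
    ne_zero_of_natDegree_gt (n := 0) (by omega)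
  have ha2 : (a ^ 2).natDegree = 2 * a.natDegree := by rw [natDegree_pow, mul_comm]
  have hbd : (b ^ 2 * (X ^ 5 + X ^ 3 + X ^ 2 + X)).natDegree = 2 * b.natDegree + 5 := by
    rw [natDegree_mul (pow_ne_zero 2 hb) hd0, natDegree_pow, hd, mul_comm]
  have hab : (a * b * X).natDegree ≤ a.natDegree + b.natDegree + 1 :=
    natDegree_mul_le.trans (add_le_add natDegree_mul_le natDegree_X_le)
  unfold normForm
  rcases le_or_gt a.natDegree (b.natDegree + 2) with h | h
  · rw [natDegree_add_eq_right_of_natDegree_lt] <;>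
      [omega; exact (natDegree_add_le _ _).trans_lt (by omega)]
  · rw [add_assoc, natDegree_add_eq_left_of_natDegree_lt] <;>
      [omega; exact (natDegree_add_le _ _).trans_lt (by omega)]

theorem normForm_ne {a b w : (ZMod 2)[X]} (hw1 : w.coeff 1 ≠ 0) (hw5 : w.natDegree < 5) :
    normForm a b ≠ w := by
  rintro rfl
  by_cases hb : b = 0
  · exact hw1 (by simp [normForm, hb, Polynomial.coeff_pow_char_one])
  · exact absurd (le_natDegree_normForm (a := a) hb) (by omega)

theorem eq_one_of_normForm_eq_one {a b : (ZMod 2)[X]} (h : normForm a b = 1) : a = 1 ∧ b = 0 := by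
  have hb : b = 0 := by
    by_contra hb
    simpa [h] using le_natDegree_normForm (a := a) hb
  subst hb
  have ha : a ^ 2 = 1 := by rw [← h, normForm]; ring
  exact ⟨frobenius_inj (ZMod 2)[X] 2 (by rw [frobenius_def, frobenius_def, ha, one_pow]), rfl⟩

theorem eq_one_of_mul_eq_one {g h : R2} (hgh : g * h = 1) : g = 1 := by
  obtain ⟨a, b, rfl⟩ := exists_eq_ofPoly_add_ofPoly_mul_y2 g
  obtain ⟨c, d, rfl⟩ := exists_eq_ofPoly_add_ofPoly_mul_y2 h
  have hN : normForm a b * normForm c d = 1 := ofPoly_injective <| by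
    rw [map_mul, map_one, ← mul_conj, ← mul_conj, mul_mul_mul_comm, ← map_mul conj, hgh,
      map_one, mul_one]
  obtain ⟨rfl, rfl⟩ :=
    eq_one_of_normForm_eq_one (Polynomial.eq_one_of_isUnit (IsUnit.of_mul_eq_one _ hN))
  simp

instance : Unique R2ˣ where
  default := 1
  uniq u := Units.ext (eq_one_of_mul_eq_one u.mul_inv)

theorem not_isPrincipal_of_mul_map_conj_eq [IsDomain R2] {I : Ideal R2} {w : (ZMod 2)[X]}
    (hI : I * I.map conj = Ideal.span {ofPoly w}) (hw1 : w.coeff 1 ≠ 0) (hw5 : w.natDegree < 5) :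
    ¬ I.IsPrincipal := by
  rintro ⟨g, rfl⟩
  rw [Ideal.submodule_span_eq, Ideal.map_span, Set.image_singleton,
    Ideal.span_singleton_mul_span_singleton, Ideal.span_singleton_eq_span_singleton,
    associated_iff_eq] at hI
  obtain ⟨a, b, rfl⟩ := exists_eq_ofPoly_add_ofPoly_mul_y2 g
  exact normForm_ne hw1 hw5 (ofPoly_injective ((mul_conj a b).symm.trans hI))

theorem span_x2_sub_one_y2_mul_map_conj :
    Ideal.span {x2 - 1, y2} * (Ideal.span {x2 - 1, y2}).map conj = Ideal.span {x2 - 1} := by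
  rw [Ideal.map_span, Set.image_pair, map_sub, map_one, conj_x2, conj_y2]
  refine Ideal.span_pair_mul_span_pair_eq_span_singleton (dvd_mul_right _ _) (dvd_mul_right _ _)
    (dvd_mul_left _ _) ⟨x2 ^ 4 + x2 ^ 3 + x2, ?_⟩ ⟨1, 1, 1, 0, ?_⟩
  · linear_combination y2_mul_y2_add_x2 + (x2 ^ 3 + x2) * two_eq_zero
  · linear_combination (x2 - 1) * (x2 + y2 - 1) * two_eq_zero

theorem span_x2_sub_one_y2_sub_one_mul_map_conj :
    Ideal.span {x2 - 1, y2 - 1} * (Ideal.span {x2 - 1, y2 - 1}).map conj =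
      Ideal.span {x2 - 1} := by
  rw [Ideal.map_span, Set.image_pair, map_sub, map_sub, map_one, conj_x2, conj_y2]
  refine Ideal.span_pair_mul_span_pair_eq_span_singleton (dvd_mul_right _ _) (dvd_mul_right _ _)
    (dvd_mul_left _ _) ⟨x2 ^ 4 + x2 ^ 3 + x2 + 1, ?_⟩ ⟨1, 1, 1, 0, ?_⟩
  · linear_combination y2_mul_y2_add_x2 + (x2 ^ 3 - y2 + 1) * two_eq_zero
  · linear_combination (x2 - 1) * (x2 + y2 - 2) * two_eq_zero

theorem map_conj_span_x2_y2 : (Ideal.span {x2, y2}).map conj = Ideal.span {x2, y2} := by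
  rw [Ideal.map_span, Set.image_pair, conj_x2, conj_y2, Ideal.span_pair_add_left]

theorem span_x2_y2_mul_self : Ideal.span {x2, y2} * Ideal.span {x2, y2} = Ideal.span {x2} :=
  Ideal.span_pair_mul_span_pair_eq_span_singleton (dvd_mul_right _ _) (dvd_mul_right _ _)
    (dvd_mul_left _ _) ⟨x2 ^ 4 + x2 ^ 2 + x2 + 1 - y2, by linear_combination y2_mul_y2_add_x2⟩
    ⟨-(x2 ^ 3 + x2 + 1), 1, 0, 1, by linear_combination y2_mul_y2_add_x2⟩

theorem mk0_ne_one_and_ne_mk0_span_x2_y2 [IsDedekindDomain R2] (I : (Ideal R2)⁰)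
    (h₀ : Ideal.span {x2, y2} ∈ (Ideal R2)⁰)
    (hI : (I : Ideal R2) * (I : Ideal R2).map conj = Ideal.span {x2 - 1}) :
    ClassGroup.mk0 I ≠ 1 ∧ ClassGroup.mk0 I ≠ ClassGroup.mk0 ⟨Ideal.span {x2, y2}, h₀⟩ := by
  have hx : x2 - 1 = ofPoly (X - 1) := by rw [map_sub, map_one, ofPoly_X]
  refine ⟨(ClassGroup.mk0_eq_one_iff I.2).not.mpr ?_,
    ClassGroup.mk0_ne_mk0_of_not_isPrincipal_mul ⟨x2, span_x2_y2_mul_self⟩ ?_⟩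
  · exact not_isPrincipal_of_mul_map_conj_eq (hx ▸ hI) (by simp [coeff_one]) (by compute_degree!)
  · refine not_isPrincipal_of_mul_map_conj_eq (w := (X - 1) * X) ?_ (by simp) (by compute_degree!)
    rw [Ideal.map_mul, mul_mul_mul_comm, hI, map_conj_span_x2_y2, span_x2_y2_mul_self,
      Ideal.span_singleton_mul_span_singleton, map_mul, ofPoly_X, hx]

end R2

/-- In the class group of `R₂`, the classes of the ideals `(x − 1, y)` and `(x − 1, y − 1)`
are nontrivial and differ from the class of `(x, y)`.  (The hypotheses `IsDedekindDomain R2`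
and `h₀, h₁₀, h₁₁` are true facts, supplied so that the classes make sense.) -/
theorem stmt_8 [IsDedekindDomain R2]
    (h₀ : Ideal.span {x2, y2} ∈ (Ideal R2)⁰)
    (h₁₀ : Ideal.span {x2 - 1, y2} ∈ (Ideal R2)⁰)
    (h₁₁ : Ideal.span {x2 - 1, y2 - 1} ∈ (Ideal R2)⁰) :
    (ClassGroup.mk0 (⟨Ideal.span {x2 - 1, y2}, h₁₀⟩ : (Ideal R2)⁰) ≠ 1 ∧
      ClassGroup.mk0 (⟨Ideal.span {x2 - 1, y2}, h₁₀⟩ : (Ideal R2)⁰) ≠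
        ClassGroup.mk0 (⟨Ideal.span {x2, y2}, h₀⟩ : (Ideal R2)⁰)) ∧
    (ClassGroup.mk0 (⟨Ideal.span {x2 - 1, y2 - 1}, h₁₁⟩ : (Ideal R2)⁰) ≠ 1 ∧
      ClassGroup.mk0 (⟨Ideal.span {x2 - 1, y2 - 1}, h₁₁⟩ : (Ideal R2)⁰) ≠
        ClassGroup.mk0 (⟨Ideal.span {x2, y2}, h₀⟩ : (Ideal R2)⁰)) :=
  ⟨R2.mk0_ne_one_and_ne_mk0_span_x2_y2 _ h₀ R2.span_x2_sub_one_y2_mul_map_conj,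
    R2.mk0_ne_one_and_ne_mk0_span_x2_y2 _ h₀ R2.span_x2_sub_one_y2_sub_one_mul_map_conj⟩
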